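/- When κ = 0, the ODE system ∂_t s_n(t) = −n·∑_{j=1}^{n−1} s_j(t)s_{n−j}(t), s_n(0) = 1, has the solution s_n(t) = (1/n)·L_{n−1}^{(1)}(2nt), where L_m^{(1)} is the Laguerre polynomial with parameter 1: L_m^{(1)}(x) = ∑_{k=0}^m binom(m+1, m−k)·(−x)^k/k!. -/

import Mathlib

/-!
Let `S(z, t) = ∑ sₙ(t) zⁿ`. The ODE says coefficientwise that `∂ₜS = -z ∂_z (S²)`, and the
explicit solution is the Lagrange inversion of `S = z φ(S)` with `φ(w) = (1 + w) e^{-2tw}`: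
`n [zⁿ] Sᵏ = k [w^{n-k}] φⁿ`, the case `k = 1` being the formula for `sₙ`. We prove this
Lagrange–Bürmann identity for all `k ≥ 1` by strong induction on `n` and downward induction on
`k`. Both sides vanish for `k > n` and agree at `t = 0`, where `n C(n-1, k-1) = k C(n, k)`. Their
`t`-derivatives agree by the case `k + 1`, because the coefficient `[zⁿ] (S^{k-1} ∂ₜS)` only sees
`∂ₜS` below degree `n`, where the case `k = 2` for smaller `n` lets us replace it by
`-z ∂_z (S²)`. The ODE itself is the case `k = 2`.
-/

open Finset Real

/-- `s n t = (1/n) L_{n-1}^{(1)}(2nt)` written explicitly through the Laguerre polynomial. -/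
noncomputable def laguerreSol (n : ℕ) (t : ℝ) : ℝ :=
  (1 / (n : ℝ)) * ∑ k ∈ Finset.range n,
    (Nat.choose n (n - 1 - k) : ℝ) * (-(2 * (n : ℝ) * t)) ^ k / (Nat.factorial k : ℝ)

open PowerSeries

namespace PowerSeries

variable {R : Type*} [CommSemiring R]

theorem coeff_pow_eq_zero_of_lt {f : R⟦X⟧} (hf : constantCoeff f = 0) {n k : ℕ} (h : n < k) :
    coeff n (f ^ k) = 0 :=
  X_pow_dvd_iff.mp (pow_dvd_pow_of_dvd (X_dvd_iff.mpr hf) k) n h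

theorem coeff_mul_congr_right {f g h : R⟦X⟧} (hf : constantCoeff f = 0) {n : ℕ}
    (hgh : ∀ j < n, coeff j g = coeff j h) : coeff n (f * g) = coeff n (f * h) := by
  rw [coeff_mul, coeff_mul]
  refine sum_congr rfl fun p hp => ?_
  rw [HasAntidiagonal.mem_antidiagonal] at hp
  rcases Nat.eq_zero_or_pos p.1 with h0 | hpos
  · rw [h0, coeff_zero_eq_constantCoeff_apply, hf, zero_mul, zero_mul]
  · rw [hgh p.2 (by omega)]

theorem coeff_X_mul_derivative (f : R⟦X⟧) (n : ℕ) :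
    coeff n (X * d⁄dX R f) = n * coeff n f := by
  cases n with
  | zero => simp
  | succ n => rw [coeff_succ_X_mul, coeff_derivative, mul_comm]; push_cast; rfl

theorem coeff_natCast_mul (m n : ℕ) (f : R⟦X⟧) : coeff n ((m : R⟦X⟧) * f) = m * coeff n f := by
  rw [← map_natCast (C (R := R)), coeff_C_mul]

end PowerSeries

section CoeffwiseDeriv

variable {F G : ℝ → ℝ⟦X⟧} {F' G' : ℝ⟦X⟧} {t : ℝ}

theorem hasDerivAt_coeff_mul (hF : ∀ n, HasDerivAt (fun u => coeff n (F u)) (coeff n F') t)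
    (hG : ∀ n, HasDerivAt (fun u => coeff n (G u)) (coeff n G') t) (n : ℕ) :
    HasDerivAt (fun u => coeff n (F u * G u)) (coeff n (F' * G t + F t * G')) t := by
  simp only [coeff_mul, map_add, ← sum_add_distrib]
  exact HasDerivAt.fun_sum fun p _ => (hF p.1).mul (hG p.2)

theorem hasDerivAt_coeff_pow (hF : ∀ n, HasDerivAt (fun u => coeff n (F u)) (coeff n F') t)
    (k n : ℕ) :
    HasDerivAt (fun u => coeff n (F u ^ (k + 1))) (coeff n (↑(k + 1) * F t ^ k * F')) t := by
  induction k generalizing n with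
  | zero => simpa using hF n
  | succ k ih =>
    simp only [pow_succ _ (k + 1)]
    convert hasDerivAt_coeff_mul ih hF n using 2
    push_cast
    ring

end CoeffwiseDeriv

/-- `lagrangeCoeff k n t = [w^(n-k)] ((1 + w) e^{-2tw})^n`. -/
noncomputable def lagrangeCoeff (k n : ℕ) (t : ℝ) : ℝ :=
  ∑ i ∈ range (n + 1), (n.choose (k + i) : ℝ) * (-(2 * n * t)) ^ i / i.factorial

theorem lagrangeCoeff_eq_zero_of_lt {k n : ℕ} (h : n < k) (t : ℝ) : lagrangeCoeff k n t = 0 :=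
  sum_eq_zero fun i _ => by simp [Nat.choose_eq_zero_of_lt (show n < k + i by omega)]

theorem lagrangeCoeff_zero_right (k n : ℕ) : lagrangeCoeff k n 0 = n.choose k := by
  simp [lagrangeCoeff, sum_range_succ']

theorem hasDerivAt_lagrangeCoeff (k n : ℕ) (t : ℝ) :
    HasDerivAt (lagrangeCoeff k n) (-(2 * n) * lagrangeCoeff (k + 1) n t) t := by
  have hterm (i : ℕ) : HasDerivAt (fun u : ℝ => (-(2 * n * u)) ^ i)
      (i * (-(2 * n * t)) ^ (i - 1) * -(2 * n * 1)) t :=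
    ((hasDerivAt_id' t).const_mul (2 * n : ℝ)).neg.pow i
  simp only [lagrangeCoeff]
  refine (HasDerivAt.fun_sum fun i _ =>
    ((hterm i).const_mul (n.choose (k + i) : ℝ)).div_const (i.factorial : ℝ)).congr_deriv ?_
  rw [sum_range_succ', sum_range_succ, Nat.choose_eq_zero_of_lt (show n < k + 1 + n by omega)]
  simp only [Nat.cast_zero, zero_mul, mul_zero, zero_div, add_zero, mul_sum]
  refine sum_congr rfl fun i _ => ?_
  rw [Nat.factorial_succ, show k + (i + 1) = k + 1 + i by omega, Nat.add_sub_cancel]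
  push_cast
  field_simp

theorem laguerreSol_eq_lagrangeCoeff (n : ℕ) (t : ℝ) :
    laguerreSol n t = lagrangeCoeff 1 n t / n := by
  rw [laguerreSol, lagrangeCoeff, sum_range_succ, Nat.choose_eq_zero_of_lt (by omega : n < 1 + n),
    Nat.cast_zero, zero_mul, zero_div, add_zero, one_div, inv_mul_eq_div]
  congr 1
  refine sum_congr rfl fun i hi => ?_
  rw [mem_range] at hi
  rw [show n - 1 - i = n - (1 + i) by omega, Nat.choose_symm (by omega)]

@[simp]
theorem laguerreSol_zero_left (t : ℝ) : laguerreSol 0 t = 0 := by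
  simp [laguerreSol]

theorem laguerreSol_zero_right {n : ℕ} (hn : 1 ≤ n) : laguerreSol n 0 = 1 := by
  rw [laguerreSol_eq_lagrangeCoeff, lagrangeCoeff_zero_right, Nat.choose_one_right,
    div_self (by positivity)]

theorem hasDerivAt_laguerreSol (n : ℕ) (t : ℝ) :
    HasDerivAt (laguerreSol n) (-2 * lagrangeCoeff 2 n t) t := by
  rcases Nat.eq_zero_or_pos n with rfl | hn
  · simpa [funext laguerreSol_zero_left, lagrangeCoeff] using hasDerivAt_const t (0 : ℝ)
  · rw [funext (laguerreSol_eq_lagrangeCoeff n)]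
    refine ((hasDerivAt_lagrangeCoeff 1 n t).div_const (n : ℝ)).congr_deriv ?_
    field_simp

noncomputable def laguerreSeries (t : ℝ) : ℝ⟦X⟧ := mk fun n => laguerreSol n t

noncomputable def laguerreSeriesDeriv (t : ℝ) : ℝ⟦X⟧ := mk fun n => -2 * lagrangeCoeff 2 n t

theorem constantCoeff_laguerreSeries (t : ℝ) : constantCoeff (laguerreSeries t) = 0 := by
  rw [← coeff_zero_eq_constantCoeff_apply, laguerreSeries, coeff_mk, laguerreSol_zero_left]

theorem laguerreSeries_zero : laguerreSeries 0 = X * (mk 1 : ℝ⟦X⟧) := by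
  ext n
  cases n with
  | zero => simp [laguerreSeries]
  | succ n => simp [laguerreSeries, laguerreSol_zero_right]

theorem hasDerivAt_coeff_laguerreSeries (t : ℝ) (n : ℕ) :
    HasDerivAt (fun u => coeff n (laguerreSeries u)) (coeff n (laguerreSeriesDeriv t)) t := by
  simpa [laguerreSeries, laguerreSeriesDeriv] using hasDerivAt_laguerreSol n t

theorem natCast_mul_coeff_laguerreSeries_zero_pow (n k : ℕ) :
    n * coeff n (laguerreSeries 0 ^ k) = k * (n.choose k : ℝ) := by
  rcases lt_or_ge n k with hnk | hkn
  · rw [coeff_pow_eq_zero_of_lt (constantCoeff_laguerreSeries 0) hnk,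
      Nat.choose_eq_zero_of_lt hnk]
    simp
  rcases k with _ | k
  · cases n <;> simp [coeff_one]
  obtain ⟨m, rfl⟩ : ∃ m, n = m + 1 := ⟨n - 1, by omega⟩
  rw [laguerreSeries_zero, mul_pow, mk_one_pow_eq_mk_choose_add, coeff_X_pow_mul', if_pos hkn,
    coeff_mk, show k + (m + 1 - (k + 1)) = m by omega, mul_comm ((k + 1 : ℕ) : ℝ)]
  exact_mod_cast Nat.add_one_mul_choose_eq m k

theorem coeff_laguerreSeries_sq (n : ℕ) (t : ℝ) :
    coeff n (laguerreSeries t ^ 2) =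
      ∑ j ∈ Icc 1 (n - 1), laguerreSol j t * laguerreSol (n - j) t := by
  rw [sq, coeff_mul, Nat.sum_antidiagonal_eq_sum_range_succ_mk]
  simp only [laguerreSeries, coeff_mk]
  refine (sum_subset (fun j hj => ?_) (fun j hj hj' => ?_)).symm
  · simp only [mem_Icc, mem_range] at hj ⊢
    omega
  · simp only [mem_Icc, mem_range, not_and_or, not_le] at hj hj'
    rcases hj' with h | h
    · simp [show j = 0 by omega]
    · simp [show n - j = 0 by omega]

theorem coeff_laguerreSeries_pow_mul_deriv {n : ℕ} (k : ℕ) {t : ℝ}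
    (hsq : ∀ j < n, (j : ℝ) * coeff j (laguerreSeries t ^ 2) = 2 * lagrangeCoeff 2 j t)
    (hpow : (n : ℝ) * coeff n (laguerreSeries t ^ (k + 2)) =
      ↑(k + 2) * lagrangeCoeff (k + 2) n t) :
    coeff n (laguerreSeries t ^ k * laguerreSeriesDeriv t) = -2 * lagrangeCoeff (k + 2) n t := by
  rcases k with _ | k
  · simp [laguerreSeriesDeriv]
  set S := laguerreSeries t
  have hS : constantCoeff (S ^ (k + 1)) = 0 := by
    rw [map_pow, constantCoeff_laguerreSeries, zero_pow (Nat.succ_ne_zero k)]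
  have hbelow : ∀ j < n, coeff j (laguerreSeriesDeriv t) = coeff j (-(X * d⁄dX ℝ (S ^ 2))) := by
    intro j hj
    rw [map_neg, coeff_X_mul_derivative, hsq j hj, laguerreSeriesDeriv, coeff_mk]
    ring
  have hident : ((k + 3 : ℕ) : ℝ⟦X⟧) * (S ^ (k + 1) * (X * d⁄dX ℝ (S ^ 2))) =
      ((2 : ℕ) : ℝ⟦X⟧) * (X * d⁄dX ℝ (S ^ (k + 3))) := by
    simp only [derivative_pow]
    push_cast
    ring
  have hcoeff := congrArg (coeff n) hident
  rw [coeff_natCast_mul, coeff_natCast_mul, coeff_X_mul_derivative, hpow] at hcoeff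
  rw [coeff_mul_congr_right hS hbelow, mul_neg, map_neg, neg_mul, neg_inj]
  refine mul_left_cancel₀ (show ((k + 3 : ℕ) : ℝ) ≠ 0 by positivity) ?_
  rw [hcoeff]
  ring

theorem natCast_mul_coeff_laguerreSeries_pow_of_succ {n : ℕ} (k : ℕ)
    (hsq : ∀ t, ∀ j < n, (j : ℝ) * coeff j (laguerreSeries t ^ 2) = 2 * lagrangeCoeff 2 j t)
    (hpow : ∀ t, (n : ℝ) * coeff n (laguerreSeries t ^ (k + 2)) =
      ↑(k + 2) * lagrangeCoeff (k + 2) n t) (t : ℝ) :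
    (n : ℝ) * coeff n (laguerreSeries t ^ (k + 1)) = ↑(k + 1) * lagrangeCoeff (k + 1) n t := by
  set f := fun u => (n : ℝ) * coeff n (laguerreSeries u ^ (k + 1)) -
    ↑(k + 1) * lagrangeCoeff (k + 1) n u
  have hf (u : ℝ) : HasDerivAt f 0 u := by
    refine (((hasDerivAt_coeff_pow (hasDerivAt_coeff_laguerreSeries u) k n).const_mul (n : ℝ)).sub
      ((hasDerivAt_lagrangeCoeff (k + 1) n u).const_mul ((k + 1 : ℕ) : ℝ))).congr_deriv ?_
    rw [mul_assoc, coeff_natCast_mul, coeff_laguerreSeries_pow_mul_deriv k (hsq u) (hpow u)]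
    ring
  have hf0 : f 0 = 0 := by
    simp only [f, natCast_mul_coeff_laguerreSeries_zero_pow, lagrangeCoeff_zero_right, sub_self]
  have hconst := is_const_of_deriv_eq_zero (fun u => (hf u).differentiableAt)
    (fun u => (hf u).deriv) t 0
  rw [hf0] at hconst
  exact sub_eq_zero.mp hconst

theorem natCast_mul_coeff_laguerreSeries_pow (n : ℕ) {k : ℕ} (hk : 1 ≤ k) (t : ℝ) :
    (n : ℝ) * coeff n (laguerreSeries t ^ k) = k * lagrangeCoeff k n t := by
  induction n using Nat.strong_induction_on generalizing k t with
  | _ n ih =>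
  have hsq (u : ℝ) :
      ∀ j < n, (j : ℝ) * coeff j (laguerreSeries u ^ 2) = 2 * lagrangeCoeff 2 j u :=
    fun j hj => by exact_mod_cast ih j hj (by norm_num) u
  have hvanish {j : ℕ} (hj : n < j) (u : ℝ) :
      (n : ℝ) * coeff n (laguerreSeries u ^ j) = j * lagrangeCoeff j n u := by
    rw [coeff_pow_eq_zero_of_lt (constantCoeff_laguerreSeries u) hj,
      lagrangeCoeff_eq_zero_of_lt hj, mul_zero, mul_zero]
  rcases lt_or_ge n k with hnk | hkn
  · exact hvanish hnk t
  refine Nat.decreasingInduction'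
    (P := fun j => ∀ u, (n : ℝ) * coeff n (laguerreSeries u ^ j) = ↑j * lagrangeCoeff j n u)
    (fun j _ hkj hsucc => ?_) (Nat.le_succ_of_le hkn) (hvanish n.lt_succ_self) t
  obtain ⟨j, rfl⟩ : ∃ i, j = i + 1 := ⟨j - 1, by omega⟩
  exact natCast_mul_coeff_laguerreSeries_pow_of_succ j hsq hsucc

theorem stmt11 (n : ℕ) (hn : 1 ≤ n) :
    laguerreSol n 0 = 1 ∧
    ∀ t : ℝ, HasDerivAt (laguerreSol n)
      (-(n : ℝ) * ∑ j ∈ Finset.Icc 1 (n - 1), laguerreSol j t * laguerreSol (n - j) t) t := by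
  refine ⟨laguerreSol_zero_right hn, fun t => (hasDerivAt_laguerreSol n t).congr_deriv ?_⟩
  rw [← coeff_laguerreSeries_sq, neg_mul (n : ℝ),
    natCast_mul_coeff_laguerreSeries_pow n one_le_two t]
  push_cast
  ring
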